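/- Full characterization of rejection for synthesized monitors: if for every sHML body ψ the regular monitor m(ψ) is both sound and violation-complete, then for every Hyper¹-sHML formula φ and every nonempty finite set T of infinite traces, rej(Syn(φ), T) holds if and only if T ⊭ φ. -/
import Mathlib

inductive Verdict where
  | yes | no | end_ | inc
deriving DecidableEq

def pref {Act : Type} (t : ℕ → Act) (n : ℕ) : List Act :=
  (List.range n).map t

inductive Hyper (ψT : Type) where
  | ex  : ψT → Hyper ψT
  | all : ψT → Hyper ψT
  | or  : Hyper ψT → Hyper ψT → Hyper ψT
  | and : Hyper ψT → Hyper ψT → Hyper ψT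

def HSat {Act ψT : Type} (SatPsi : ψT → (ℕ → Act) → Prop)
    (T : Set (ℕ → Act)) : Hyper ψT → Prop
  | .ex ψ => ∃ t ∈ T, SatPsi ψ t
  | .all ψ => ∀ t ∈ T, SatPsi ψ t
  | .or φ₁ φ₂ => HSat SatPsi T φ₁ ∨ HSat SatPsi T φ₂
  | .and φ₁ φ₂ => HSat SatPsi T φ₁ ∧ HSat SatPsi T φ₂

/-- Rejection predicate of the synthesized monitor Syn(φ), where
`m ψ` is the verdict function of the regular monitor m(ψ). -/
def SynRej {Act ψT : Type} (m : ψT → List Act → Verdict)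
    (T : Set (ℕ → Act)) : Hyper ψT → Prop
  | .ex ψ => ∀ t ∈ T, ∃ n, m ψ (pref t n) = Verdict.no
  | .all ψ => ∃ t ∈ T, ∃ n, m ψ (pref t n) = Verdict.no
  | .or φ₁ φ₂ => SynRej m T φ₁ ∧ SynRej m T φ₂
  | .and φ₁ φ₂ => SynRej m T φ₁ ∨ SynRej m T φ₂

theorem stmt18
    (Act ψT : Type)
    (SatPsi : ψT → (ℕ → Act) → Prop)
    (m : ψT → List Act → Verdict)
    (sound : ∀ ψ (t : ℕ → Act), (∃ n, m ψ (pref t n) = Verdict.no) → ¬ SatPsi ψ t)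
    (violation_complete : ∀ ψ (t : ℕ → Act), ¬ SatPsi ψ t → ∃ n, m ψ (pref t n) = Verdict.no)
    : ∀ (φ : Hyper ψT) (T : Set (ℕ → Act)), T.Finite → T.Nonempty →
      (SynRej m T φ ↔ ¬ HSat SatPsi T φ)
    := by
  intro φ
  induction φ with
  | ex ψ =>
    intro T _ _
    simp only [SynRej, HSat]
    constructor
    · rintro h ⟨t, ht, hs⟩; exact sound ψ t (h t ht) hs
    · intro h t ht; exact violation_complete ψ t (fun hs => h ⟨t, ht, hs⟩)
  | all ψ =>
    intro T _ _
    simp only [SynRej, HSat]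
    constructor
    · rintro ⟨t, ht, hn⟩ hall; exact sound ψ t hn (hall t ht)
    · intro h
      push_neg at h
      obtain ⟨t, ht, hs⟩ := h
      exact ⟨t, ht, violation_complete ψ t hs⟩
  | or φ₁ φ₂ ih₁ ih₂ =>
    intro T hf hne
    simp only [SynRej, HSat, ih₁ T hf hne, ih₂ T hf hne, not_or]
  | and φ₁ φ₂ ih₁ ih₂ =>
    intro T hf hne
    simp only [SynRej, HSat, ih₁ T hf hne, ih₂ T hf hne]
    tauto
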